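/- arXiv:1110.4253 — 3 statements merged into one kernel-verified Lean document; each statement's English description precedes it below -/
import Mathlib

section
/- Let (a_n)_{n=1}^∞ be a sequence of scalars with a_1 = a_2 = 0 satisfying Σ_{k=0}^∞ ( Σ_{n=ν_k+1}^{ν_{k+1}} |a_n|² (log₂ n)² )^{1/2} < ∞ with ν_k := 2^{2^k}, let (φ_n)_{n=1}^∞ be an orthonormal system in L₂(X, dμ; H) with fixed strongly measurable representatives, and let σ be a permutation of ℕ. With M_k := {j ∈ ℕ : ν_k + 1 ≤ j ≤ ν_{k+1}} and δ_k(x) := sup_{1 ≤ p ≤ q < ∞} ‖Σ_{n=p}^{q}, restricted to indices n with σ(n) ∈ M_k, a_{σ(n)} φ_{σ(n)}(x)‖_H, one has Σ_{k=0}^∞ δ_k(x) < ∞ for μ-almost every x ∈ X. -/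
/-!
Menshov–Rademacher: if `ψ` is orthogonal in `L²` on a finite set `t ⊆ ℕ`, the maximal function of
the partial sums along `t` has `L²`-norm at most `(⌈log₂ #t⌉ + 1) ‖∑_{n ∈ t} ψ n‖₂`. Split `t`
into a lower and an upper half: every partial sum is at most the full lower sum plus the larger of
the maximal functions of the two halves. Halving lowers `⌈log₂ #t⌉` by one, so by induction and
Pythagoras the larger maximal function has `L²`-norm at most `⌈log₂ #t⌉ ‖∑_{n ∈ t} ψ n‖₂`.

The rearranged block `{n | σ n ∈ M_k}` is such a set, with `#M_k ≤ 2 ^ 2 ^ (k + 1)`, so the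
constant is at most `3 · 2 ^ k ≤ 3 log₂ n` on `M_k`. A sum over `p < n ≤ q` is a difference of two
partial sums, hence `‖δ_k‖₂ ≤ 6 (∑_{n ∈ M_k} |a_n|² log₂² n)^{1/2}`. These norms are summable, so
`∑ δ_k` lies in `L²` by Minkowski and is finite almost everywhere.
-/

open MeasureTheory Finset
open scoped ENNReal

theorem Finset.exists_card_filter_lt_eq (t : Finset ℕ) {m : ℕ} (hm : m ≤ #t) :
    ∃ c, #{n ∈ t | n < c} = m := by
  induction m with
  | zero => exact ⟨0, by simp⟩
  | succ m ih =>
    obtain ⟨c, hc⟩ := ih (by omega)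
    have hne : {n ∈ t | ¬n < c}.Nonempty := by
      have := card_filter_add_card_filter_not (s := t) (· < c)
      rw [← card_pos]
      omega
    set b := {n ∈ t | ¬n < c}.min' hne
    have hb : b ∈ t ∧ ¬b < c := mem_filter.1 (min'_mem _ hne)
    have hb_min (n : ℕ) (hn : n ∈ t) (hnc : ¬n < c) : b ≤ n := min'_le _ n (mem_filter.2 ⟨hn, hnc⟩)
    have hinsert : {n ∈ t | n < b + 1} = insert b {n ∈ t | n < c} := by
      ext n
      simp only [mem_filter, mem_insert]
      constructor
      · rintro ⟨hn, hnb⟩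
        by_cases hnc : n < c
        · exact Or.inr ⟨hn, hnc⟩
        · exact Or.inl (le_antisymm (Nat.lt_succ_iff.1 hnb) (hb_min n hn hnc))
      · rintro (rfl | ⟨hn, hnc⟩)
        · exact ⟨hb.1, by omega⟩
        · exact ⟨hn, by omega⟩
    exact ⟨b + 1, by rw [hinsert, card_insert_of_notMem (by simp [hb.2]), hc]⟩

section MaxPartialSum

variable {E : Type*} [NormedAddCommGroup E]

noncomputable def maxPartialSum (t : Finset ℕ) (v : ℕ → E) : ℝ≥0∞ :=
  ⨆ q, ‖∑ n ∈ t with n < q, v n‖ₑ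

theorem le_maxPartialSum (t : Finset ℕ) (v : ℕ → E) (q : ℕ) :
    ‖∑ n ∈ t with n < q, v n‖ₑ ≤ maxPartialSum t v :=
  le_iSup (fun q => ‖∑ n ∈ t with n < q, v n‖ₑ) q

theorem maxPartialSum_le_of_card_le_one {t : Finset ℕ} (ht : #t ≤ 1) (v : ℕ → E) :
    maxPartialSum t v ≤ ‖∑ n ∈ t, v n‖ₑ := by
  refine iSup_le fun q => ?_
  rcases {n ∈ t | n < q}.eq_empty_or_nonempty with h | h
  · simp [h]
  · rw [eq_of_subset_of_card_le (filter_subset _ t) (ht.trans h.card_pos)]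

theorem maxPartialSum_le_add_max (t : Finset ℕ) (v : ℕ → E) (c : ℕ) :
    maxPartialSum t v ≤ ‖∑ n ∈ t with n < c, v n‖ₑ +
      max (maxPartialSum {n ∈ t | n < c} v) (maxPartialSum {n ∈ t | ¬n < c} v) := by
  refine iSup_le fun q => ?_
  rcases le_or_gt q c with hqc | hcq
  · have hlow : {n ∈ t | n < q} = {n ∈ {n ∈ t | n < c} | n < q} := by
      rw [filter_filter]
      exact filter_congr fun n _ => by omega
    rw [hlow]
    exact ((le_maxPartialSum _ v q).trans (le_max_left _ _)).trans le_add_self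
  · have hsplit : ∑ n ∈ t with n < q, v n =
        ∑ n ∈ t with n < c, v n + ∑ n ∈ {n ∈ t | ¬n < c} with n < q, v n := by
      rw [← sum_filter_add_sum_filter_not {n ∈ t | n < q} (· < c), filter_filter, filter_filter,
        filter_filter]
      congr 2 <;> exact filter_congr fun n _ => by omega
    rw [hsplit]
    exact (enorm_add_le _ _).trans
      (by gcongr; exact (le_maxPartialSum _ v q).trans (le_max_right _ _))

theorem iSup_enorm_sum_Icc_filter_le (t : Finset ℕ) (v : ℕ → E) :
    ⨆ p, ⨆ q, ‖∑ n ∈ Icc (p + 1) q with n ∈ t, v n‖ₑ ≤ 2 * maxPartialSum t v := by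
  refine iSup₂_le fun p q => ?_
  rcases le_or_gt q p with hqp | hpq
  · simp [Icc_eq_empty_of_lt (Nat.lt_succ_of_le hqp)]
  · have hdiff : ∑ n ∈ Icc (p + 1) q with n ∈ t, v n =
        ∑ n ∈ t with n < q + 1, v n - ∑ n ∈ t with n < p + 1, v n := by
      rw [eq_sub_iff_add_eq, ← sum_filter_add_sum_filter_not {n ∈ t | n < q + 1} (p + 1 ≤ ·),
        filter_filter, filter_filter]
      congr 2
      · ext n
        by_cases hn : n ∈ t <;> simp [hn]
        omega
      · exact filter_congr fun n _ => by omega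
    rw [hdiff, two_mul]
    exact enorm_sub_le.trans (add_le_add (le_maxPartialSum _ v _) (le_maxPartialSum _ v _))

end MaxPartialSum

/-- `M_k = {ν_k + 1, …, ν_{k+1}}` with `ν_k = 2 ^ 2 ^ k`. -/
def lacunaryBlock (k : ℕ) : Finset ℕ := Icc (2 ^ 2 ^ k + 1) (2 ^ 2 ^ (k + 1))

theorem one_le_of_mem_lacunaryBlock {k n : ℕ} (hn : n ∈ lacunaryBlock k) : 1 ≤ n :=
  (Nat.le_add_left 1 _).trans (mem_Icc.1 hn).1

theorem clog_card_lacunaryBlock_add_one_le (k : ℕ) :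
    Nat.clog 2 #(lacunaryBlock k) + 1 ≤ 3 * 2 ^ k := by
  have hcard : #(lacunaryBlock k) ≤ 2 ^ 2 ^ (k + 1) := by
    rw [lacunaryBlock, Nat.card_Icc]
    exact Nat.sub_le_of_le_add (Nat.add_le_add_left (Nat.le_add_left 1 _) _)
  have hclog : Nat.clog 2 #(lacunaryBlock k) ≤ 2 ^ (k + 1) :=
    (Nat.clog_mono_right 2 hcard).trans_eq (Nat.clog_pow 2 _ one_lt_two)
  have : 1 ≤ 2 ^ k := Nat.one_le_two_pow
  rw [pow_succ] at hclog
  omega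

theorem two_pow_le_logb_of_mem_lacunaryBlock {k n : ℕ} (hn : n ∈ lacunaryBlock k) :
    (2 : ℝ) ^ k ≤ Real.logb 2 n := by
  have hle : ((2 ^ 2 ^ k : ℕ) : ℝ) ≤ n := by
    exact_mod_cast (Nat.le_succ _).trans (mem_Icc.1 hn).1
  calc (2 : ℝ) ^ k = Real.logb 2 ((2 ^ 2 ^ k : ℕ) : ℝ) := by
        rw [Nat.cast_pow, Nat.cast_ofNat, Real.logb_pow, Real.logb_self_eq_one one_lt_two]
        push_cast
        ring
    _ ≤ Real.logb 2 n := Real.logb_le_logb_of_le one_lt_two (by positivity) hle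

theorem clog_card_lacunaryBlock_mul_sqrt_le (k : ℕ) (a : ℕ → ℝ) :
    (Nat.clog 2 #(lacunaryBlock k) + 1 : ℝ) * √(∑ n ∈ lacunaryBlock k, a n ^ 2) ≤
      3 * √(∑ n ∈ lacunaryBlock k, a n ^ 2 * Real.logb 2 n ^ 2) := by
  have hC (n : ℕ) (hn : n ∈ lacunaryBlock k) :
      (Nat.clog 2 #(lacunaryBlock k) + 1 : ℝ) ≤ 3 * Real.logb 2 n :=
    calc (Nat.clog 2 #(lacunaryBlock k) + 1 : ℝ) ≤ 3 * 2 ^ k := by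
          exact_mod_cast clog_card_lacunaryBlock_add_one_le k
      _ ≤ 3 * Real.logb 2 n := by gcongr; exact two_pow_le_logb_of_mem_lacunaryBlock hn
  rw [← Real.sqrt_sq (by positivity : (0 : ℝ) ≤ Nat.clog 2 #(lacunaryBlock k) + 1),
    ← Real.sqrt_mul (by positivity), ← Real.sqrt_sq (by norm_num : (0 : ℝ) ≤ 3),
    ← Real.sqrt_mul (by positivity), mul_sum, mul_sum]
  refine Real.sqrt_le_sqrt (sum_le_sum fun n hn => ?_)
  have := pow_le_pow_left₀ (by positivity) (hC n hn) 2
  nlinarith [sq_nonneg (a n)]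

section Measure

variable {X : Type*} [MeasurableSpace X] {μ : Measure X}

theorem ae_tsum_lt_top_of_tsum_eLpNorm_ne_top {δ : ℕ → X → ℝ≥0∞}
    (hδ : ∀ k, AEMeasurable (δ k) μ) {p : ℝ≥0∞} (hp : 1 ≤ p) (hp_top : p ≠ ∞)
    (h : ∑' k, eLpNorm (δ k) p μ ≠ ∞) :
    ∀ᵐ x ∂μ, ∑' k, δ k x < ∞ := by
  have hp0 : p ≠ 0 := (zero_lt_one.trans_le hp).ne'
  have hr : 0 < p.toReal := ENNReal.toReal_pos hp0 hp_top
  have hpartial (K : ℕ) : ∫⁻ x, (∑ k ∈ range K, δ k x) ^ p.toReal ∂μ ≤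
      (∑' k, eLpNorm (δ k) p μ) ^ p.toReal := by
    have hK := (eLpNorm_sum_le (s := range K) (fun k _ => (hδ k).aestronglyMeasurable) hp).trans
      (ENNReal.sum_le_tsum (f := fun k => eLpNorm (δ k) p μ) _)
    rw [eLpNorm_eq_eLpNorm' hp0 hp_top, ← ENNReal.rpow_le_rpow_iff hr,
      ← lintegral_rpow_enorm_eq_rpow_eLpNorm' hr] at hK
    simpa [Finset.sum_apply] using hK
  have hlint : ∫⁻ x, (∑' k, δ k x) ^ p.toReal ∂μ ≠ ∞ := by
    have hsup (x : X) :
        (∑' k, δ k x) ^ p.toReal = ⨆ K, (∑ k ∈ range K, δ k x) ^ p.toReal := by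
      rw [ENNReal.tsum_eq_iSup_nat]
      exact (ENNReal.orderIsoRpow p.toReal hr).map_iSup _
    simp_rw [hsup]
    rw [lintegral_iSup' (fun K => (Finset.aemeasurable_fun_sum _ fun k _ => hδ k).pow_const _)
      (ae_of_all _ fun x K L hKL =>
        ENNReal.rpow_le_rpow (sum_le_sum_of_subset (range_mono hKL)) hr.le)]
    exact ne_top_of_le_ne_top (ENNReal.rpow_ne_top_of_nonneg hr.le h) (iSup_le hpartial)
  filter_upwards [ae_lt_top' ((AEMeasurable.tsum hδ).pow_const _) hlint] with x hx
  exact (ENNReal.rpow_lt_top_iff_of_pos hr).1 hx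

theorem eLpNorm_max_sq_le {f g : X → ℝ≥0∞} (hf : AEMeasurable f μ) :
    eLpNorm (fun x => max (f x) (g x)) 2 μ ^ 2 ≤ eLpNorm f 2 μ ^ 2 + eLpNorm g 2 μ ^ 2 := by
  have hsq (h : X → ℝ≥0∞) : eLpNorm h 2 μ ^ 2 = ∫⁻ x, h x ^ 2 ∂μ := by
    simpa [ENNReal.rpow_two] using eLpNorm_nnreal_pow_eq_lintegral (f := h) (μ := μ) two_ne_zero
  rw [hsq, hsq, hsq, ← lintegral_add_left' (hf.pow_const 2)]
  refine lintegral_mono fun x => ?_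
  rcases le_total (f x) (g x) with h | h <;> simp [h]

variable {𝕜 : Type*} [RCLike 𝕜] {H : Type*} [NormedAddCommGroup H] [InnerProductSpace 𝕜 H]

theorem MeasureTheory.MemLp.inner_toLp_toLp {f g : X → H} (hf : MemLp f 2 μ)
    (hg : MemLp g 2 μ) : inner 𝕜 (hf.toLp f) (hg.toLp g) = ∫ x, inner 𝕜 (f x) (g x) ∂μ := by
  rw [L2.inner_def]
  refine integral_congr_ae ?_
  filter_upwards [hf.coeFn_toLp, hg.coeFn_toLp] with x hfx hgx
  rw [hfx, hgx]

theorem MeasureTheory.MemLp.integrable_inner {f g : X → H} (hf : MemLp f 2 μ)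
    (hg : MemLp g 2 μ) : Integrable (fun x => inner 𝕜 (f x) (g x)) μ :=
  (L2.integrable_inner (hf.toLp f) (hg.toLp g)).congr <| by
    filter_upwards [hf.coeFn_toLp, hg.coeFn_toLp] with x hfx hgx
    rw [hfx, hgx]

theorem eLpNorm_add_sq_of_integral_inner_eq_zero {f g : X → H} (hf : MemLp f 2 μ)
    (hg : MemLp g 2 μ) (h : ∫ x, inner 𝕜 (f x) (g x) ∂μ = 0) :
    eLpNorm (f + g) 2 μ ^ 2 = eLpNorm f 2 μ ^ 2 + eLpNorm g 2 μ ^ 2 := by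
  have hpyth := norm_add_sq_eq_norm_sq_add_norm_sq_of_inner_eq_zero (𝕜 := 𝕜) _ _
    ((hf.inner_toLp_toLp hg).trans h)
  rw [← Lp.enorm_toLp hf, ← Lp.enorm_toLp hg, ← Lp.enorm_toLp (hf.add hg), MemLp.toLp_add hf hg]
  simp only [← ofReal_norm, ← ENNReal.ofReal_pow (norm_nonneg _), sq, hpyth]
  rw [ENNReal.ofReal_add (by positivity) (by positivity)]

theorem eLpNorm_sum_sq_of_pairwise_integral_inner_eq_zero {ι : Type*} {ψ : ι → X → H}
    {s : Finset ι} (hψ : ∀ i ∈ s, MemLp (ψ i) 2 μ)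
    (horth : (s : Set ι).Pairwise fun i j => ∫ x, inner 𝕜 (ψ i x) (ψ j x) ∂μ = 0) :
    eLpNorm (∑ i ∈ s, ψ i) 2 μ ^ 2 = ∑ i ∈ s, eLpNorm (ψ i) 2 μ ^ 2 := by
  classical
  induction s using Finset.induction_on with
  | empty => simp
  | insert a s ha ih =>
    have hψa := hψ a (mem_insert_self a s)
    have hψs (i : ι) (hi : i ∈ s) := hψ i (mem_insert_of_mem hi)
    rw [sum_insert ha, sum_insert ha,
      eLpNorm_add_sq_of_integral_inner_eq_zero (𝕜 := 𝕜) hψa (memLp_finsetSum' s hψs),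
      ih hψs (horth.mono (by simp))]
    simp only [Finset.sum_apply, inner_sum]
    rw [integral_finsetSum s fun i hi => hψa.integrable_inner (hψs i hi)]
    exact sum_eq_zero fun i hi => horth (by simp) (by simp [hi]) (by rintro rfl; exact ha hi)

theorem eLpNorm_sum_filter_sq_add_sum_filter_not_sq {ι : Type*} {ψ : ι → X → H} {s : Finset ι}
    (p : ι → Prop) [DecidablePred p] (hψ : ∀ i ∈ s, MemLp (ψ i) 2 μ)
    (horth : (s : Set ι).Pairwise fun i j => ∫ x, inner 𝕜 (ψ i x) (ψ j x) ∂μ = 0) :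
    eLpNorm (∑ i ∈ s with p i, ψ i) 2 μ ^ 2 + eLpNorm (∑ i ∈ s with ¬p i, ψ i) 2 μ ^ 2 =
      eLpNorm (∑ i ∈ s, ψ i) 2 μ ^ 2 := by
  rw [eLpNorm_sum_sq_of_pairwise_integral_inner_eq_zero hψ horth,
    eLpNorm_sum_sq_of_pairwise_integral_inner_eq_zero (fun i hi => hψ i (filter_subset _ _ hi))
      (horth.mono (coe_subset.2 (filter_subset _ _))),
    eLpNorm_sum_sq_of_pairwise_integral_inner_eq_zero (fun i hi => hψ i (filter_subset _ _ hi))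
      (horth.mono (coe_subset.2 (filter_subset _ _)))]
  exact sum_filter_add_sum_filter_not _ _ _

theorem pairwise_integral_inner_smul_eq_zero {ι : Type*} [DecidableEq ι] {φ : ι → X → H}
    {s : Finset ι} (a : ι → 𝕜)
    (horth : ∀ i ∈ s, ∀ j ∈ s, ∫ x, inner 𝕜 (φ i x) (φ j x) ∂μ = if i = j then 1 else 0) :
    (s : Set ι).Pairwise fun i j => ∫ x, inner 𝕜 ((a i • φ i) x) ((a j • φ j) x) ∂μ = 0 := by
  intro i hi j hj hij
  simp only [Pi.smul_apply, inner_smul_left, inner_smul_right]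
  rw [integral_const_mul, integral_const_mul, horth i hi j hj, if_neg hij, mul_zero, mul_zero]

theorem eLpNorm_sum_smul_of_orthonormal {ι : Type*} [DecidableEq ι] {φ : ι → X → H}
    {s : Finset ι} (a : ι → 𝕜) (hφ : ∀ i ∈ s, MemLp (φ i) 2 μ)
    (horth : ∀ i ∈ s, ∀ j ∈ s, ∫ x, inner 𝕜 (φ i x) (φ j x) ∂μ = if i = j then 1 else 0) :
    eLpNorm (∑ i ∈ s, a i • φ i) 2 μ = ENNReal.ofReal √(∑ i ∈ s, ‖a i‖ ^ 2) := by
  have hnorm (i : ι) (hi : i ∈ s) : eLpNorm (φ i) 2 μ = 1 := by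
    have h1 := horth i hi i hi
    rw [if_pos rfl, ← (hφ i hi).inner_toLp_toLp (hφ i hi), inner_self_eq_norm_sq_to_K] at h1
    have h2 : ‖(hφ i hi).toLp (φ i)‖ = 1 := by
      have : ‖(hφ i hi).toLp (φ i)‖ ^ 2 = 1 := by exact_mod_cast h1
      nlinarith [norm_nonneg ((hφ i hi).toLp (φ i))]
    rw [← Lp.enorm_toLp (hφ i hi), ← ofReal_norm, h2, ENNReal.ofReal_one]
  have hsq := eLpNorm_sum_sq_of_pairwise_integral_inner_eq_zero
    (fun i hi => (hφ i hi).const_smul (a i)) (pairwise_integral_inner_smul_eq_zero a horth)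
  refine (ENNReal.pow_right_strictMono two_ne_zero).injective ?_
  rw [hsq, ← ENNReal.ofReal_pow (Real.sqrt_nonneg _), Real.sq_sqrt (by positivity),
    ENNReal.ofReal_sum_of_nonneg (fun i _ => by positivity)]
  refine sum_congr rfl fun i hi => ?_
  rw [eLpNorm_const_smul, hnorm i hi, mul_one, ENNReal.ofReal_pow (norm_nonneg _), ofReal_norm]

theorem aemeasurable_maxPartialSum (t : Finset ℕ) {ψ : ℕ → X → H}
    (hψ : ∀ n ∈ t, AEStronglyMeasurable (ψ n) μ) :
    AEMeasurable (fun x => maxPartialSum t (ψ · x)) μ :=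
  AEMeasurable.iSup fun _ =>
    (Finset.aestronglyMeasurable_fun_sum _ fun n hn => hψ n (mem_filter.1 hn).1).enorm

theorem eLpNorm_maxPartialSum_le_of_split (t : Finset ℕ) (c : ℕ) {ψ : ℕ → X → H}
    (hψ : ∀ n ∈ t, MemLp (ψ n) 2 μ)
    (horth : (t : Set ℕ).Pairwise fun m n => ∫ x, inner 𝕜 (ψ m x) (ψ n x) ∂μ = 0) {C : ℝ≥0∞}
    (hlow : eLpNorm (fun x => maxPartialSum {n ∈ t | n < c} (ψ · x)) 2 μ ≤
      C * eLpNorm (∑ n ∈ t with n < c, ψ n) 2 μ)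
    (hhigh : eLpNorm (fun x => maxPartialSum {n ∈ t | ¬n < c} (ψ · x)) 2 μ ≤
      C * eLpNorm (∑ n ∈ t with ¬n < c, ψ n) 2 μ) :
    eLpNorm (fun x => maxPartialSum t (ψ · x)) 2 μ ≤ (C + 1) * eLpNorm (∑ n ∈ t, ψ n) 2 μ := by
  set t₁ := {n ∈ t | n < c}
  set t₂ := {n ∈ t | ¬n < c}
  have hψ₁ (n : ℕ) (hn : n ∈ t₁) := hψ n (filter_subset _ _ hn)
  have hψ₂ (n : ℕ) (hn : n ∈ t₂) := hψ n (filter_subset _ _ hn)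
  have hpyth := eLpNorm_sum_filter_sq_add_sum_filter_not_sq (· < c) hψ horth
  have hmeas₁ := aemeasurable_maxPartialSum t₁ fun n hn => (hψ₁ n hn).1
  have hmeas₂ := aemeasurable_maxPartialSum t₂ fun n hn => (hψ₂ n hn).1
  have hmax : eLpNorm (fun x => max (maxPartialSum t₁ (ψ · x)) (maxPartialSum t₂ (ψ · x))) 2 μ
      ≤ C * eLpNorm (∑ n ∈ t, ψ n) 2 μ := by
    rw [← ENNReal.pow_le_pow_left_iff two_ne_zero, mul_pow, ← hpyth, mul_add, ← mul_pow,
      ← mul_pow]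
    exact (eLpNorm_max_sq_le hmeas₁).trans
      (add_le_add (pow_le_pow_left' hlow 2) (pow_le_pow_left' hhigh 2))
  have hlow_le : eLpNorm (∑ n ∈ t₁, ψ n) 2 μ ≤ eLpNorm (∑ n ∈ t, ψ n) 2 μ := by
    rw [← ENNReal.pow_le_pow_left_iff two_ne_zero, ← hpyth]
    exact le_self_add
  calc eLpNorm (fun x => maxPartialSum t (ψ · x)) 2 μ
      ≤ eLpNorm ((fun x => ‖(∑ n ∈ t₁, ψ n) x‖ₑ) +
          fun x => max (maxPartialSum t₁ (ψ · x)) (maxPartialSum t₂ (ψ · x))) 2 μ :=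
        eLpNorm_mono_enorm fun x => by
          simp only [enorm_eq_self, Pi.add_apply, Finset.sum_apply]
          exact maxPartialSum_le_add_max t (ψ · x) c
    _ ≤ eLpNorm (∑ n ∈ t₁, ψ n) 2 μ +
          eLpNorm (fun x => max (maxPartialSum t₁ (ψ · x)) (maxPartialSum t₂ (ψ · x))) 2 μ := by
        rw [← eLpNorm_enorm (∑ n ∈ t₁, ψ n)]
        exact eLpNorm_add_le
          (memLp_finsetSum' t₁ hψ₁).aestronglyMeasurable.enorm.aestronglyMeasurable
          (hmeas₁.max hmeas₂).aestronglyMeasurable one_le_two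
    _ ≤ (C + 1) * eLpNorm (∑ n ∈ t, ψ n) 2 μ := by
        exact (add_le_add hlow_le hmax).trans_eq (by ring)

/-- The Menshov–Rademacher inequality. -/
theorem eLpNorm_maxPartialSum_le (t : Finset ℕ) {ψ : ℕ → X → H}
    (hψ : ∀ n ∈ t, MemLp (ψ n) 2 μ)
    (horth : (t : Set ℕ).Pairwise fun m n => ∫ x, inner 𝕜 (ψ m x) (ψ n x) ∂μ = 0) :
    eLpNorm (fun x => maxPartialSum t (ψ · x)) 2 μ ≤
      (Nat.clog 2 #t + 1) * eLpNorm (∑ n ∈ t, ψ n) 2 μ := by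
  induction h : #t using Nat.strong_induction_on generalizing t with
  | _ N ih =>
  rcases lt_or_ge N 2 with hN | hN
  · calc eLpNorm (fun x => maxPartialSum t (ψ · x)) 2 μ ≤ eLpNorm (∑ n ∈ t, ψ n) 2 μ :=
          eLpNorm_mono_enorm fun x => by
            simpa [Finset.sum_apply] using maxPartialSum_le_of_card_le_one (by omega) (ψ · x)
      _ ≤ _ := le_mul_of_one_le_left' (by simp)
  obtain ⟨c, hc⟩ := t.exists_card_filter_lt_eq (m := (N + 1) / 2) (by omega)
  have hcard := card_filter_add_card_filter_not (s := t) (· < c)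
  have hclog : Nat.clog 2 N = Nat.clog 2 #{n ∈ t | n < c} + 1 := by
    rw [Nat.clog_of_two_le one_lt_two hN, hc, show N + 2 - 1 = N + 1 by omega]
  have hlow := ih #{n ∈ t | n < c} (by omega) {n ∈ t | n < c}
    (fun n hn => hψ n (filter_subset _ _ hn)) (horth.mono (coe_subset.2 (filter_subset _ _))) rfl
  have hhigh := ih #{n ∈ t | ¬n < c} (by omega) {n ∈ t | ¬n < c}
    (fun n hn => hψ n (filter_subset _ _ hn)) (horth.mono (coe_subset.2 (filter_subset _ _))) rfl
  have hclog_high : (Nat.clog 2 #{n ∈ t | ¬n < c} : ℝ≥0∞) ≤ Nat.clog 2 #{n ∈ t | n < c} := by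
    exact_mod_cast Nat.clog_mono_right 2 (by omega)
  rw [hclog, Nat.cast_add, Nat.cast_one]
  exact eLpNorm_maxPartialSum_le_of_split t c hψ horth hlow
    (hhigh.trans (by gcongr))

theorem eLpNorm_maxPartialSum_perm_le (σ : Equiv.Perm ℕ) (s : Finset ℕ) (a : ℕ → 𝕜)
    {φ : ℕ → X → H} (hφ : ∀ n ∈ s, MemLp (φ n) 2 μ)
    (horth : ∀ m ∈ s, ∀ n ∈ s, ∫ x, inner 𝕜 (φ m x) (φ n x) ∂μ = if m = n then 1 else 0) :
    eLpNorm (fun x => maxPartialSum (s.map σ.symm.toEmbedding) fun n => a (σ n) • φ (σ n) x)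
        2 μ ≤ (Nat.clog 2 #s + 1) * ENNReal.ofReal √(∑ m ∈ s, ‖a m‖ ^ 2) := by
  set t := s.map σ.symm.toEmbedding
  have hmem {n : ℕ} : n ∈ t ↔ σ n ∈ s := by simp [t, mem_map_equiv]
  have hφσ (n : ℕ) (hn : n ∈ t) : MemLp (φ (σ n)) 2 μ := hφ _ (hmem.1 hn)
  have horthσ : ∀ m ∈ t, ∀ n ∈ t,
      ∫ x, inner 𝕜 (φ (σ m) x) (φ (σ n) x) ∂μ = if m = n then 1 else 0 := fun m hm n hn => by
    simp [horth _ (hmem.1 hm) _ (hmem.1 hn)]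
  have hmax := eLpNorm_maxPartialSum_le t (ψ := fun n => a (σ n) • φ (σ n))
    (fun n hn => (hφσ n hn).const_smul _) (pairwise_integral_inner_smul_eq_zero _ horthσ)
  rw [eLpNorm_sum_smul_of_orthonormal _ hφσ horthσ, card_map] at hmax
  simpa [t, sum_map] using hmax

theorem eLpNorm_maxPartialSum_lacunaryBlock_le (σ : Equiv.Perm ℕ) (k : ℕ) (a : ℕ → 𝕜)
    {φ : ℕ → X → H} (hφ : ∀ n ∈ lacunaryBlock k, MemLp (φ n) 2 μ)
    (horth : ∀ m ∈ lacunaryBlock k, ∀ n ∈ lacunaryBlock k,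
      ∫ x, inner 𝕜 (φ m x) (φ n x) ∂μ = if m = n then 1 else 0) :
    eLpNorm (fun x => maxPartialSum ((lacunaryBlock k).map σ.symm.toEmbedding)
        fun n => a (σ n) • φ (σ n) x) 2 μ
      ≤ 3 * ENNReal.ofReal √(∑ n ∈ lacunaryBlock k, ‖a n‖ ^ 2 * Real.logb 2 n ^ 2) := by
  refine (eLpNorm_maxPartialSum_perm_le σ _ a hφ horth).trans ?_
  calc ((Nat.clog 2 #(lacunaryBlock k) : ℝ≥0∞) + 1) *
        ENNReal.ofReal √(∑ n ∈ lacunaryBlock k, ‖a n‖ ^ 2)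
      = ENNReal.ofReal ((Nat.clog 2 #(lacunaryBlock k) + 1 : ℝ) *
          √(∑ n ∈ lacunaryBlock k, ‖a n‖ ^ 2)) := by
        rw [ENNReal.ofReal_mul (by positivity), ENNReal.ofReal_add (by positivity) zero_le_one,
          ENNReal.ofReal_natCast, ENNReal.ofReal_one]
    _ ≤ ENNReal.ofReal (3 * √(∑ n ∈ lacunaryBlock k, ‖a n‖ ^ 2 * Real.logb 2 n ^ 2)) :=
        ENNReal.ofReal_le_ofReal (clog_card_lacunaryBlock_mul_sqrt_le k (‖a ·‖))
    _ = _ := by rw [ENNReal.ofReal_mul zero_le_three, ENNReal.ofReal_ofNat]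

end Measure

theorem rearranged_block_majorants_ae_summable_general
    {X : Type*} [MeasurableSpace X] (μ : Measure X)
    {𝕜 : Type*} [RCLike 𝕜]
    {H : Type*} [NormedAddCommGroup H] [InnerProductSpace 𝕜 H]
    (a : ℕ → 𝕜) (φ : ℕ → X → H)
    (hmem : ∀ n, 1 ≤ n → MemLp (φ n) 2 μ)
    (horth : ∀ n m, 1 ≤ n → 1 ≤ m →
      ∫ x, (inner 𝕜 (φ n x) (φ m x) : 𝕜) ∂μ = if n = m then (1 : 𝕜) else 0)
    (hA : Summable fun k : ℕ =>
      Real.sqrt (∑ n ∈ Finset.Icc (2 ^ 2 ^ k + 1) (2 ^ 2 ^ (k + 1)),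
        ‖a n‖ ^ 2 * (Real.logb 2 (n : ℝ)) ^ 2))
    (σ : Equiv.Perm ℕ) :
    ∀ᵐ x ∂μ,
      (∑' k : ℕ, ⨆ p : ℕ, ⨆ q : ℕ,
        (‖∑ n ∈ (Finset.Icc (p + 1) q).filter
            (fun n => σ n ∈ Finset.Icc (2 ^ 2 ^ k + 1) (2 ^ 2 ^ (k + 1))),
          a (σ n) • φ (σ n) x‖₊ : ℝ≥0∞)) < ⊤ := by
  set t : ℕ → Finset ℕ := fun k => (lacunaryBlock k).map σ.symm.toEmbedding
  set Φ : ℕ → X → ℝ≥0∞ := fun k x => maxPartialSum (t k) fun n => a (σ n) • φ (σ n) x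
  have hφ (k n : ℕ) (hn : n ∈ lacunaryBlock k) : MemLp (φ n) 2 μ :=
    hmem n (one_le_of_mem_lacunaryBlock hn)
  have hΦ (k : ℕ) := eLpNorm_maxPartialSum_lacunaryBlock_le σ k a (hφ k) fun m hm n hn =>
    horth m n (one_le_of_mem_lacunaryBlock hm) (one_le_of_mem_lacunaryBlock hn)
  have hΦ_meas (k : ℕ) : AEMeasurable (Φ k) μ := aemeasurable_maxPartialSum _ fun n hn =>
    ((hφ k _ (by simpa [t, mem_map_equiv] using hn)).const_smul _).1
  have hA' : Summable fun k => √(∑ n ∈ lacunaryBlock k, ‖a n‖ ^ 2 * Real.logb 2 n ^ 2) := hA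
  have hΦ_sum : ∑' k, eLpNorm (Φ k) 2 μ ≠ ∞ := by
    refine ne_top_of_le_ne_top ?_ (ENNReal.tsum_le_tsum hΦ)
    rw [ENNReal.tsum_mul_left, ← ENNReal.ofReal_tsum_of_nonneg (fun k => Real.sqrt_nonneg _) hA']
    exact ENNReal.mul_ne_top ENNReal.ofNat_ne_top ENNReal.ofReal_ne_top
  filter_upwards [ae_tsum_lt_top_of_tsum_eLpNorm_ne_top hΦ_meas one_le_two (by norm_num) hΦ_sum]
    with x hx
  calc _ ≤ ∑' k, 2 * Φ k x := ENNReal.tsum_le_tsum fun k => by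
        have hfilter (p q : ℕ) :
            {n ∈ Icc (p + 1) q | σ n ∈ Icc (2 ^ 2 ^ k + 1) (2 ^ 2 ^ (k + 1))} =
              {n ∈ Icc (p + 1) q | n ∈ t k} :=
          filter_congr fun n _ => by simp [t, lacunaryBlock, mem_map_equiv]
        simp only [hfilter, ← enorm_eq_nnnorm]
        exact iSup_enorm_sum_Icc_filter_le (t k) _
    _ < ∞ := by
        rw [ENNReal.tsum_mul_left]
        exact ENNReal.mul_lt_top ENNReal.ofNat_lt_top hx

/-- A.e. summability of the majorants δ_k of the rearranged blocks. -/
theorem rearranged_block_majorants_ae_summable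
    {X : Type*} [MeasurableSpace X] (μ : Measure X)
    {𝕜 : Type*} [RCLike 𝕜]
    {H : Type*} [NormedAddCommGroup H] [InnerProductSpace 𝕜 H] [CompleteSpace H]
    (a : ℕ → 𝕜) (φ : ℕ → X → H)
    (hmem : ∀ n, 1 ≤ n → MemLp (φ n) 2 μ)
    (horth : ∀ n m, 1 ≤ n → 1 ≤ m →
      ∫ x, (inner 𝕜 (φ n x) (φ m x) : 𝕜) ∂μ = if n = m then (1 : 𝕜) else 0)
    (ha1 : a 1 = 0) (ha2 : a 2 = 0)
    (hA : Summable fun k : ℕ =>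
      Real.sqrt (∑ n ∈ Finset.Icc (2 ^ 2 ^ k + 1) (2 ^ 2 ^ (k + 1)),
        ‖a n‖ ^ 2 * (Real.logb 2 (n : ℝ)) ^ 2))
    (σ : Equiv.Perm ℕ) (hσ : σ 0 = 0) :
    ∀ᵐ x ∂μ,
      (∑' k : ℕ, ⨆ p : ℕ, ⨆ q : ℕ,
        (‖∑ n ∈ (Finset.Icc (p + 1) q).filter
            (fun n => σ n ∈ Finset.Icc (2 ^ 2 ^ k + 1) (2 ^ 2 ^ (k + 1))),
          a (σ n) • φ (σ n) x‖₊ : ℝ≥0∞)) < ⊤ :=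
  rearranged_block_majorants_ae_summable_general μ a φ hmem horth hA σ
end

section
/- Let (a_n)_{n=1}^∞ be a sequence of scalars (real or complex) and (ω_n)_{n=1}^∞ a nondecreasing sequence of positive real numbers such that Σ_{n=2}^∞ |a_n|² (log₂ n)² ω_n < ∞ and Σ_{n=2}^∞ 1/(n (log₂ n) ω_n) < ∞. Then, with ν_k := 2^{2^k}, one has Σ_{k=0}^∞ ( Σ_{n=ν_k+1}^{ν_{k+1}} |a_n|² (log₂ n)² )^{1/2} < ∞. -/
open Finset Real

/-! Writing `W k = ω (2^2^k + 1)` and `S k` for the `k`-th Tandori block, AM–GM gives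
`√(S k) ≤ (S k * W k + 1 / W k) / 2`. Since `ω` is nondecreasing, `S k * W k` is at most the
`k`-th block of the first Orlicz series. The second Orlicz series controls `∑ 1 / W k`: on the block
`(2^2^k, 2^2^(k+1)]` one has `ω n ≤ W (k+1)`, while `∑ 1 / (n log₂ n)` over that block is at least
`1/4`, as one sees by splitting it into the `2^k` dyadic pieces `(2^j, 2^(j+1)]`. -/

theorem Finset.sum_Ico_sum_Ioc_of_monotone {M : Type*} [AddCommMonoid M] (f : ℕ → M)
    {φ : ℕ → ℕ} (hφ : Monotone φ) {m n : ℕ} (hmn : m ≤ n) :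
    ∑ j ∈ Ico m n, ∑ i ∈ Ioc (φ j) (φ (j + 1)), f i = ∑ i ∈ Ioc (φ m) (φ n), f i := by
  induction n, hmn using Nat.le_induction with
  | base => simp
  | succ n hmn ih =>
    rw [sum_Ico_succ_top hmn, ih, sum_Ioc_consecutive f (hφ hmn) (hφ n.le_succ)]

theorem Summable.sum_Ioc_of_monotone {f : ℕ → ℝ} (hf : Summable f) (hf₀ : 0 ≤ f)
    {φ : ℕ → ℕ} (hφ : Monotone φ) :
    Summable fun k ↦ ∑ i ∈ Ioc (φ k) (φ (k + 1)), f i := by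
  refine summable_of_sum_range_le (c := ∑' i, f i) (fun k ↦ sum_nonneg fun i _ ↦ hf₀ i) fun K ↦ ?_
  rw [range_eq_Ico, sum_Ico_sum_Ioc_of_monotone f hφ K.zero_le]
  exact hf.sum_le_tsum _ fun i _ ↦ hf₀ i

theorem Real.sqrt_le_mul_add_inv_div_two {x w : ℝ} (hx : 0 ≤ x) (hw : 0 < w) :
    √x ≤ (x * w + 1 / w) / 2 := by
  rw [Real.sqrt_le_left (by positivity)]
  have h := four_mul_le_sq_add (x * w) (1 / w)
  rw [mul_assoc 4, mul_assoc x, mul_one_div_cancel hw.ne', mul_one] at h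
  linarith

theorem one_div_two_mul_succ_le_sum_Ioc_two_pow (j : ℕ) :
    1 / (2 * ((j : ℝ) + 1)) ≤ ∑ n ∈ Ioc (2 ^ j : ℕ) (2 ^ (j + 1)), 1 / ((n : ℝ) * logb 2 n) := by
  have hterm : ∀ n ∈ Ioc (2 ^ j : ℕ) (2 ^ (j + 1)),
      1 / ((2 : ℝ) ^ (j + 1) * ((j : ℝ) + 1)) ≤ 1 / ((n : ℝ) * logb 2 n) := by
    intro n hn
    obtain ⟨hlo, hhi⟩ := mem_Ioc.mp hn
    have hn_le : (n : ℝ) ≤ 2 ^ (j + 1) := by exact_mod_cast hhi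
    have hn_gt : (1 : ℝ) < n := by exact_mod_cast j.one_le_two_pow.trans_lt hlo
    have hlog_pos : 0 < logb 2 (n : ℝ) := logb_pos one_lt_two hn_gt
    have hlog_le : logb 2 (n : ℝ) ≤ j + 1 := by
      calc logb 2 (n : ℝ) ≤ logb 2 ((2 : ℝ) ^ (j + 1)) :=
            logb_le_logb_of_le one_lt_two (by positivity) hn_le
        _ = j + 1 := by rw [logb_pow, logb_self_eq_one one_lt_two]; push_cast; ring
    have : (0 : ℝ) < n := by positivity
    gcongr
  have hcard : #(Ioc (2 ^ j) (2 ^ (j + 1))) = 2 ^ j := by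
    rw [Nat.card_Ioc, pow_succ]; omega
  calc 1 / (2 * ((j : ℝ) + 1))
      = #(Ioc (2 ^ j) (2 ^ (j + 1))) • (1 / ((2 : ℝ) ^ (j + 1) * ((j : ℝ) + 1))) := by
        rw [hcard, nsmul_eq_mul, pow_succ]; push_cast; field_simp
    _ ≤ _ := card_nsmul_le_sum _ _ _ hterm

theorem one_div_four_le_sum_Ioc_two_pow_two_pow (k : ℕ) :
    1 / 4 ≤ ∑ n ∈ Ioc (2 ^ 2 ^ k : ℕ) (2 ^ 2 ^ (k + 1)), 1 / ((n : ℝ) * logb 2 n) := by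
  have hdyadic := sum_Ico_sum_Ioc_of_monotone (fun n : ℕ ↦ 1 / ((n : ℝ) * logb 2 n))
    (pow_right_mono₀ one_le_two) (pow_right_mono₀ one_le_two k.le_succ)
  simp only at hdyadic
  rw [← hdyadic]
  have hterm : ∀ j ∈ Ico (2 ^ k : ℕ) (2 ^ (k + 1)),
      1 / (4 * (2 : ℝ) ^ k) ≤ 1 / (2 * ((j : ℝ) + 1)) := by
    intro j hj
    have hj : (j : ℝ) + 1 ≤ 2 * 2 ^ k := by
      have := (mem_Ico.mp hj).2
      rw [pow_succ'] at this
      exact_mod_cast this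
    exact one_div_le_one_div_of_le (by positivity) (by linarith)
  have hcard : #(Ico (2 ^ k : ℕ) (2 ^ (k + 1))) = 2 ^ k := by
    rw [Nat.card_Ico, pow_succ]; omega
  calc (1 : ℝ) / 4 = #(Ico (2 ^ k : ℕ) (2 ^ (k + 1))) • (1 / (4 * (2 : ℝ) ^ k)) := by
        rw [hcard, nsmul_eq_mul]; push_cast; field_simp
    _ ≤ ∑ j ∈ Ico (2 ^ k : ℕ) (2 ^ (k + 1)), 1 / (2 * ((j : ℝ) + 1)) :=
        card_nsmul_le_sum _ _ _ hterm
    _ ≤ _ := sum_le_sum fun j _ ↦ one_div_two_mul_succ_le_sum_Ioc_two_pow j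

theorem one_div_le_four_mul_sum_Ioc_two_pow_two_pow {ω : ℕ → ℝ}
    (hω_pos : ∀ n, 1 ≤ n → 0 < ω n) (hω_mono : ∀ n m, 1 ≤ n → n ≤ m → ω n ≤ ω m) (k : ℕ) :
    1 / ω (2 ^ 2 ^ (k + 1) + 1) ≤
      4 * ∑ n ∈ Ioc (2 ^ 2 ^ k : ℕ) (2 ^ 2 ^ (k + 1)), 1 / ((n : ℝ) * logb 2 n * ω n) := by
  set W := ω (2 ^ 2 ^ (k + 1) + 1)
  have hW : 0 < W := hω_pos _ le_add_self
  have hterm : ∀ n ∈ Ioc (2 ^ 2 ^ k : ℕ) (2 ^ 2 ^ (k + 1)),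
      1 / ((n : ℝ) * logb 2 n) / W ≤ 1 / ((n : ℝ) * logb 2 n * ω n) := by
    intro n hn
    obtain ⟨hlo, hhi⟩ := mem_Ioc.mp hn
    have hn_gt : 1 < n := Nat.one_le_two_pow.trans_lt hlo
    have : 0 < logb 2 (n : ℝ) := logb_pos one_lt_two (by exact_mod_cast hn_gt)
    have : 0 < ω n := hω_pos n (by omega)
    have : (0 : ℝ) < n := by positivity
    rw [div_div]
    gcongr
    exact hω_mono n _ (by omega) (by omega)
  calc 1 / W = 4 * (1 / 4 / W) := by field_simp
    _ ≤ 4 * ((∑ n ∈ Ioc (2 ^ 2 ^ k : ℕ) (2 ^ 2 ^ (k + 1)), 1 / ((n : ℝ) * logb 2 n)) / W) := by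
        gcongr; exact one_div_four_le_sum_Ioc_two_pow_two_pow k
    _ ≤ _ := by rw [sum_div]; gcongr 4 * ?_; exact sum_le_sum hterm

/-- The Orlicz conditions imply the Tandori condition. -/
theorem orlicz_conditions_imply_tandori_condition
    {𝕜 : Type*} [RCLike 𝕜]
    (a : ℕ → 𝕜) (ω : ℕ → ℝ)
    (hω_pos : ∀ n, 1 ≤ n → 0 < ω n)
    (hω_mono : ∀ n m, 1 ≤ n → n ≤ m → ω n ≤ ω m)
    (h8 : Summable fun n : ℕ =>
      ‖a (n + 2)‖ ^ 2 * (Real.logb 2 ((n : ℝ) + 2)) ^ 2 * ω (n + 2))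
    (h9 : Summable fun n : ℕ =>
      1 / (((n : ℝ) + 2) * Real.logb 2 ((n : ℝ) + 2) * ω (n + 2))) :
    Summable fun k : ℕ =>
      Real.sqrt (∑ n ∈ Finset.Icc (2 ^ 2 ^ k + 1) (2 ^ 2 ^ (k + 1)),
        ‖a n‖ ^ 2 * (Real.logb 2 (n : ℝ)) ^ 2) := by
  have hν : Monotone fun k : ℕ ↦ 2 ^ 2 ^ k :=
    (pow_right_mono₀ one_le_two).comp (pow_right_mono₀ one_le_two)
  -- `log₂ 0 = log₂ 1 = 0`, so extending the Orlicz series to `n = 0, 1` adds only zero terms.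
  set F : ℕ → ℝ := fun n ↦ ‖a n‖ ^ 2 * logb 2 (n : ℝ) ^ 2 * ω n
  set G : ℕ → ℝ := fun n ↦ 1 / ((n : ℝ) * logb 2 n * ω n)
  have hF₀ : 0 ≤ F := by
    rintro (_ | n)
    · simp [F]
    · have := hω_pos (n + 1) le_add_self; positivity
  have hG₀ : 0 ≤ G := by
    rintro (_ | n)
    · simp [G]
    · have := hω_pos (n + 1) le_add_self
      have : 0 ≤ logb 2 ((n + 1 : ℕ) : ℝ) := logb_nonneg one_lt_two (by simp)
      positivity
  have hF : Summable F := (summable_nat_add_iff 2).mp (h8.congr fun n ↦ by simp [F])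
  have hG : Summable G := (summable_nat_add_iff 2).mp (h9.congr fun n ↦ by simp [G])
  have hW : Summable fun k ↦ 1 / ω (2 ^ 2 ^ k + 1) :=
    (summable_nat_add_iff 1).mp <| Summable.of_nonneg_of_le
      (fun k ↦ (one_div_pos.mpr (hω_pos _ le_add_self)).le)
      (one_div_le_four_mul_sum_Ioc_two_pow_two_pow hω_pos hω_mono)
      ((hG.sum_Ioc_of_monotone hG₀ hν).mul_left 4)
  refine Summable.of_nonneg_of_le (fun k ↦ sqrt_nonneg _) (fun k ↦ ?_)
    (((hF.sum_Ioc_of_monotone hF₀ hν).add hW).div_const 2)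
  rw [Icc_add_one_left_eq_Ioc]
  refine (sqrt_le_mul_add_inv_div_two (sum_nonneg fun n _ ↦ by positivity)
    (hω_pos (2 ^ 2 ^ k + 1) le_add_self)).trans ?_
  gcongr
  rw [sum_mul]
  refine sum_le_sum fun n hn ↦ ?_
  have hn := mem_Ioc.mp hn
  exact mul_le_mul_of_nonneg_left (hω_mono _ n le_add_self (by omega)) (by positivity)
end

section
/- Let N ≥ 1 be an integer, let (ψ_n)_{n=1}^N be functions in L₂(X, dμ; H), and suppose there is a constant c₂ > 0 such that ‖Σ_{n=1}^N b_n ψ_n‖₂² ≤ c₂ Σ_{n=1}^N |b_n|² for all scalars b_1, …, b_N. Then for any scalars b_1, …, b_N the function S*_N(x) := max_{1 ≤ j ≤ N} ‖Σ_{n=1}^j b_n ψ_n(x)‖_H satisfies (∫_X S*_N(x)² dμ(x))^{1/2} ≤ √c₂ · (2 + log₂ N) · (Σ_{n=1}^N |b_n|²)^{1/2}. -/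
open MeasureTheory Finset
open scoped ENNReal NNReal

/-!
Every partial sum `∑_{n ≤ j} b_n ψ_n` with `j ≤ N ≤ 2^K` is a sum of at most one dyadic block
`(i 2^k, (i+1) 2^k]` from each level `k ≤ K` (read off the binary expansion of `j`). Hence
`S*_N ≤ ∑_{k ≤ K} M_k`, where `M_k` is the largest dyadic block sum at level `k`. Bounding the
maximum by the sum of squares, `‖M_k‖₂² ≤ ∑_i ‖block_{k,i}‖₂² ≤ c₂ ∑_i ∑_{n ∈ block_{k,i}} |b_n|²
= c₂ ∑_n |b_n|²`, since the blocks of one level are disjoint. Minkowski's inequality gives the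
factor `K + 1 = ⌈log₂ N⌉ + 1 ≤ 2 + log₂ N`.
-/

lemma Nat.cast_clog_two_lt_logb_add_one (N : ℕ) : (Nat.clog 2 N : ℝ) < Real.logb 2 N + 1 := by
  have hlog : 0 ≤ Real.logb 2 N :=
    div_nonneg (Real.log_natCast_nonneg N) (Real.log_nonneg one_le_two)
  have := Nat.ceil_lt_add_one hlog
  rwa [← Nat.cast_ofNat, Real.natCeil_logb_natCast, Nat.cast_ofNat] at this

lemma ENNReal.iSup_rpow_le_tsum {ι : Type*} {p : ℝ} (hp : 0 < p) (a : ι → ℝ≥0∞) :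
    (⨆ i, a i) ^ p ≤ ∑' i, a i ^ p := by
  have h := (ENNReal.orderIsoRpow p hp).map_iSup a
  simp only [ENNReal.orderIsoRpow_apply] at h
  rw [h]
  exact iSup_le ENNReal.le_tsum

section DyadicBlock

def dyadicBlock (k i : ℕ) : Finset ℕ := Ioc (i * 2 ^ k) ((i + 1) * 2 ^ k)

lemma mem_dyadicBlock_iff {k n i : ℕ} (hn : 1 ≤ n) :
    n ∈ dyadicBlock k i ↔ i = (n - 1) / 2 ^ k := by
  have hpos := Nat.two_pow_pos k
  rw [dyadicBlock, mem_Ioc, eq_comm, Nat.div_eq_iff hpos, add_one_mul]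
  omega

lemma tsum_sum_inter_dyadicBlock (k : ℕ) {s : Finset ℕ} (hs : 0 ∉ s) (f : ℕ → ℝ≥0∞) :
    ∑' i, ∑ n ∈ s ∩ dyadicBlock k i, f n = ∑ n ∈ s, f n := by
  classical
  simp_rw [← sum_ite_mem]
  rw [Summable.tsum_finsetSum fun _ _ => ENNReal.summable]
  refine sum_congr rfl fun n hn => ?_
  simp_rw [mem_dyadicBlock_iff (Nat.one_le_iff_ne_zero.mpr (ne_of_mem_of_not_mem hn hs))]
  exact tsum_ite_eq _ _

variable {E : Type*} [TopologicalSpace E] [ESeminormedAddCommMonoid E]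

noncomputable def dyadicMaxBlockSum (g : ℕ → E) (k : ℕ) : ℝ≥0∞ :=
  ⨆ i, ‖∑ n ∈ dyadicBlock k i, g n‖ₑ

lemma dyadicMaxBlockSum_ite_mem (s : Finset ℕ) (f : ℕ → E) (k : ℕ) :
    dyadicMaxBlockSum (fun n => if n ∈ s then f n else 0) k =
      ⨆ i, ‖∑ n ∈ s ∩ dyadicBlock k i, f n‖ₑ := by
  simp only [dyadicMaxBlockSum, sum_ite_mem, inter_comm]

lemma enorm_sum_Ioc_le_sum_dyadicMaxBlockSum (g : ℕ → E) {K : ℕ} :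
    ∀ {m j : ℕ}, j < 2 ^ K →
      ‖∑ n ∈ Ioc (m * 2 ^ K) (m * 2 ^ K + j), g n‖ₑ ≤ ∑ k ∈ range K, dyadicMaxBlockSum g k := by
  induction K with
  | zero =>
    intro m j hj
    obtain rfl : j = 0 := by simpa using hj
    simp
  | succ K ih =>
    intro m j hj
    have hm : m * 2 ^ (K + 1) = 2 * m * 2 ^ K := by ring
    rw [sum_range_succ, hm]
    rcases lt_or_ge j (2 ^ K) with hj' | hj'
    · exact (ih hj').trans le_self_add
    -- `j = 2^K + r`: the block `2m` of level `K`, then `r < 2^K` terms starting at `(2m+1) 2^K`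
    obtain ⟨r, rfl⟩ := Nat.exists_eq_add_of_le hj'
    have hr : r < 2 ^ K := by rw [pow_succ] at hj; omega
    have hsplit : ∑ n ∈ dyadicBlock K (2 * m), g n +
          ∑ n ∈ Ioc ((2 * m + 1) * 2 ^ K) ((2 * m + 1) * 2 ^ K + r), g n =
        ∑ n ∈ Ioc (2 * m * 2 ^ K) (2 * m * 2 ^ K + (2 ^ K + r)), g n := by
      rw [dyadicBlock, add_one_mul, ← add_assoc]
      exact sum_Ioc_consecutive g (by omega) (by omega)
    rw [← hsplit, add_comm _ (dyadicMaxBlockSum g K)]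
    exact (enorm_add_le _ _).trans
      (add_le_add (le_iSup (fun i => ‖∑ n ∈ dyadicBlock K i, g n‖ₑ) _) (ih hr))

lemma iSup_enorm_sum_Icc_le_sum_dyadicMaxBlockSum (f : ℕ → E) (N : ℕ) :
    ⨆ j ∈ Icc 1 N, ‖∑ n ∈ Icc 1 j, f n‖ₑ ≤
      ∑ k ∈ range (Nat.clog 2 N + 1),
        dyadicMaxBlockSum (fun n => if n ∈ Icc 1 N then f n else 0) k := by
  refine iSup₂_le fun j hj => ?_
  have hjN := (mem_Icc.mp hj).2
  have htrunc : ∑ n ∈ Icc 1 j, f n = ∑ n ∈ Ioc (0 * 2 ^ (Nat.clog 2 N + 1))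
      (0 * 2 ^ (Nat.clog 2 N + 1) + j), if n ∈ Icc 1 N then f n else 0 := by
    rw [zero_mul, zero_add, ← Icc_add_one_left_eq_Ioc]
    exact sum_congr rfl fun n hn => (if_pos (Icc_subset_Icc_right hjN hn)).symm
  rw [htrunc]
  exact enorm_sum_Ioc_le_sum_dyadicMaxBlockSum _
    ((hjN.trans (Nat.le_pow_clog one_lt_two N)).trans_lt (Nat.pow_lt_pow_succ one_lt_two))

end DyadicBlock

section Riesz

variable {X : Type*} [MeasurableSpace X] {μ : Measure X}

lemma eLpNorm_iSup_enorm_rpow_le_tsum {ι E : Type*} [Countable ι] [TopologicalSpace E]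
    [ContinuousENorm E] {f : ι → X → E} (hf : ∀ i, AEStronglyMeasurable (f i) μ)
    {p : ℝ≥0} (hp : p ≠ 0) :
    eLpNorm (fun x => ⨆ i, ‖f i x‖ₑ) p μ ^ (p : ℝ) ≤ ∑' i, eLpNorm (f i) p μ ^ (p : ℝ) := by
  simp only [eLpNorm_nnreal_pow_eq_lintegral hp, enorm_eq_self]
  refine (lintegral_mono fun x => ?_).trans (lintegral_tsum fun i => (hf i).enorm.pow_const _).le
  exact ENNReal.iSup_rpow_le_tsum (by positivity) _

lemma eLpNorm_iSup_enorm_sq_le_tsum {ι E : Type*} [Countable ι] [TopologicalSpace E]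
    [ContinuousENorm E] {f : ι → X → E} (hf : ∀ i, AEStronglyMeasurable (f i) μ) :
    eLpNorm (fun x => ⨆ i, ‖f i x‖ₑ) 2 μ ^ 2 ≤ ∑' i, eLpNorm (f i) 2 μ ^ 2 := by
  simpa [ENNReal.rpow_two] using eLpNorm_iSup_enorm_rpow_le_tsum hf (p := 2) two_ne_zero

lemma lintegral_sq_rpow_half_eq_eLpNorm (F : X → ℝ≥0∞) :
    (∫⁻ x, F x ^ 2 ∂μ) ^ (1 / 2 : ℝ) = eLpNorm F 2 μ := by
  rw [eLpNorm_eq_lintegral_rpow_enorm_toReal two_ne_zero ENNReal.ofNat_ne_top]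
  simp only [ENNReal.toReal_ofNat, enorm_eq_self, ENNReal.rpow_two]

variable {𝕜 H : Type*} [NormedField 𝕜] [NormedAddCommGroup H] [NormedSpace 𝕜 H]
  {ψ : ℕ → X → H} {s : Finset ℕ} {c : ℝ}

lemma aestronglyMeasurable_dyadicMaxBlockSum (hmeas : ∀ n ∈ s, AEStronglyMeasurable (ψ n) μ)
    (b : ℕ → 𝕜) (k : ℕ) :
    AEStronglyMeasurable
      (fun x => dyadicMaxBlockSum (fun n => if n ∈ s then b n • ψ n x else 0) k) μ := by
  simp only [dyadicMaxBlockSum_ite_mem]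
  exact (AEMeasurable.iSup fun i => (Finset.aestronglyMeasurable_fun_sum _
    fun n hn => (hmeas n (mem_inter.mp hn).1).const_smul (b n)).enorm).aestronglyMeasurable

lemma eLpNorm_sum_inter_sq_le
    (hriesz : ∀ b : ℕ → 𝕜, eLpNorm (fun x => ∑ n ∈ s, b n • ψ n x) 2 μ ^ 2 ≤
      ENNReal.ofReal (c * ∑ n ∈ s, ‖b n‖ ^ 2)) (b : ℕ → 𝕜) (t : Finset ℕ) :
    eLpNorm (fun x => ∑ n ∈ s ∩ t, b n • ψ n x) 2 μ ^ 2 ≤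
      ENNReal.ofReal c * ∑ n ∈ s ∩ t, ENNReal.ofReal (‖b n‖ ^ 2) := by
  classical
  have h := hriesz fun n => if n ∈ t then b n else 0
  simp only [ite_smul, zero_smul, apply_ite norm, norm_zero, ite_pow, sum_ite_mem] at h
  rw [zero_pow two_ne_zero, sum_ite_mem] at h
  rwa [ENNReal.ofReal_mul' (sum_nonneg fun _ _ => by positivity),
    ENNReal.ofReal_sum_of_nonneg fun _ _ => by positivity] at h

lemma eLpNorm_dyadicMaxBlockSum_le (hs : 0 ∉ s) (hmeas : ∀ n ∈ s, AEStronglyMeasurable (ψ n) μ)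
    (hriesz : ∀ b : ℕ → 𝕜, eLpNorm (fun x => ∑ n ∈ s, b n • ψ n x) 2 μ ^ 2 ≤
      ENNReal.ofReal (c * ∑ n ∈ s, ‖b n‖ ^ 2)) (b : ℕ → 𝕜) (k : ℕ) :
    eLpNorm (fun x => dyadicMaxBlockSum (fun n => if n ∈ s then b n • ψ n x else 0) k) 2 μ ≤
      ENNReal.ofReal (√c * √(∑ n ∈ s, ‖b n‖ ^ 2)) := by
  have hB : 0 ≤ ∑ n ∈ s, ‖b n‖ ^ 2 := sum_nonneg fun _ _ => by positivity
  have hsq : ENNReal.ofReal (√c * √(∑ n ∈ s, ‖b n‖ ^ 2)) ^ 2 =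
      ENNReal.ofReal c * ∑ n ∈ s, ENNReal.ofReal (‖b n‖ ^ 2) := by
    rw [← ENNReal.ofReal_pow (by positivity), mul_pow, Real.sq_sqrt', Real.sq_sqrt hB,
      ENNReal.ofReal_mul' hB, ENNReal.ofReal_max, ENNReal.ofReal_zero, max_eq_left zero_le,
      ENNReal.ofReal_sum_of_nonneg fun _ _ => by positivity]
  rw [← ENNReal.pow_le_pow_left_iff two_ne_zero, hsq]
  simp only [dyadicMaxBlockSum_ite_mem]
  calc eLpNorm (fun x => ⨆ i, ‖∑ n ∈ s ∩ dyadicBlock k i, b n • ψ n x‖ₑ) 2 μ ^ 2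
      ≤ ∑' i, eLpNorm (fun x => ∑ n ∈ s ∩ dyadicBlock k i, b n • ψ n x) 2 μ ^ 2 :=
        eLpNorm_iSup_enorm_sq_le_tsum fun i => Finset.aestronglyMeasurable_fun_sum _
          fun n hn => (hmeas n (mem_inter.mp hn).1).const_smul (b n)
    _ ≤ ∑' i, ENNReal.ofReal c * ∑ n ∈ s ∩ dyadicBlock k i, ENNReal.ofReal (‖b n‖ ^ 2) :=
        ENNReal.tsum_le_tsum fun i => eLpNorm_sum_inter_sq_le hriesz b _
    _ = ENNReal.ofReal c * ∑ n ∈ s, ENNReal.ofReal (‖b n‖ ^ 2) := by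
        rw [ENNReal.tsum_mul_left, tsum_sum_inter_dyadicBlock k hs]

end Riesz

theorem menshov_rademacher_inequality_riesz_general
    {X : Type*} [MeasurableSpace X] (μ : Measure X)
    {𝕜 : Type*} [RCLike 𝕜]
    {H : Type*} [NormedAddCommGroup H] [InnerProductSpace 𝕜 H]
    (N : ℕ) (ψ : ℕ → X → H) (c₂ : ℝ)
    (hmem : ∀ n, 1 ≤ n → n ≤ N → MemLp (ψ n) 2 μ)
    (hriesz : ∀ b : ℕ → 𝕜,
      (eLpNorm (fun x => ∑ n ∈ Finset.Icc 1 N, b n • ψ n x) 2 μ) ^ 2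
        ≤ ENNReal.ofReal (c₂ * ∑ n ∈ Finset.Icc 1 N, ‖b n‖ ^ 2))
    (b : ℕ → 𝕜) :
    (∫⁻ x, (⨆ j ∈ Finset.Icc 1 N,
        (‖∑ n ∈ Finset.Icc 1 j, b n • ψ n x‖₊ : ℝ≥0∞)) ^ 2 ∂μ) ^ (1 / 2 : ℝ)
      ≤ ENNReal.ofReal
          (Real.sqrt c₂ * (2 + Real.logb 2 (N : ℝ)) *
            Real.sqrt (∑ n ∈ Finset.Icc 1 N, ‖b n‖ ^ 2)) := by
  set K := Nat.clog 2 N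
  set M : ℕ → X → ℝ≥0∞ := fun k x =>
    dyadicMaxBlockSum (fun n => if n ∈ Icc 1 N then b n • ψ n x else 0) k
  have hmeas : ∀ n ∈ Icc 1 N, AEStronglyMeasurable (ψ n) μ := fun n hn =>
    (hmem n (mem_Icc.mp hn).1 (mem_Icc.mp hn).2).1
  have hpoint : ∀ x, ‖⨆ j ∈ Icc 1 N, (‖∑ n ∈ Icc 1 j, b n • ψ n x‖₊ : ℝ≥0∞)‖ₑ ≤
      ‖(∑ k ∈ range (K + 1), M k) x‖ₑ := fun x => by
    simp only [enorm_eq_self, Finset.sum_apply]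
    exact iSup_enorm_sum_Icc_le_sum_dyadicMaxBlockSum (fun n => b n • ψ n x) N
  have hK : ((K + 1 : ℕ) : ℝ) ≤ 2 + Real.logb 2 N := by
    push_cast; linarith [Nat.cast_clog_two_lt_logb_add_one N]
  calc _ = eLpNorm (fun x => ⨆ j ∈ Icc 1 N, (‖∑ n ∈ Icc 1 j, b n • ψ n x‖₊ : ℝ≥0∞)) 2 μ :=
        lintegral_sq_rpow_half_eq_eLpNorm _
    _ ≤ eLpNorm (∑ k ∈ range (K + 1), M k) 2 μ := eLpNorm_mono_enorm hpoint
    _ ≤ ∑ k ∈ range (K + 1), eLpNorm (M k) 2 μ :=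
        eLpNorm_sum_le (fun k _ => aestronglyMeasurable_dyadicMaxBlockSum hmeas b k) one_le_two
    _ ≤ ∑ k ∈ range (K + 1), ENNReal.ofReal (√c₂ * √(∑ n ∈ Icc 1 N, ‖b n‖ ^ 2)) :=
        sum_le_sum fun k _ => eLpNorm_dyadicMaxBlockSum_le (by simp) hmeas hriesz b k
    _ = ENNReal.ofReal ((K + 1 : ℕ) * (√c₂ * √(∑ n ∈ Icc 1 N, ‖b n‖ ^ 2))) := by
        rw [sum_const, card_range, nsmul_eq_mul, ENNReal.ofReal_mul (Nat.cast_nonneg _),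
          ENNReal.ofReal_natCast]
    _ ≤ _ := ENNReal.ofReal_le_ofReal <| by
        have := mul_le_mul_of_nonneg_right hK
          (mul_nonneg (Real.sqrt_nonneg c₂) (Real.sqrt_nonneg (∑ n ∈ Icc 1 N, ‖b n‖ ^ 2)))
        linarith

/-- Menshov–Rademacher type inequality for a finite system satisfying a Riesz-type
upper ℓ²-bound with constant c₂. -/
theorem menshov_rademacher_inequality_riesz
    {X : Type*} [MeasurableSpace X] (μ : Measure X)
    {𝕜 : Type*} [RCLike 𝕜]
    {H : Type*} [NormedAddCommGroup H] [InnerProductSpace 𝕜 H] [CompleteSpace H]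
    (N : ℕ) (hN : 1 ≤ N) (ψ : ℕ → X → H) (c₂ : ℝ) (hc₂ : 0 < c₂)
    (hmem : ∀ n, 1 ≤ n → n ≤ N → MemLp (ψ n) 2 μ)
    (hriesz : ∀ b : ℕ → 𝕜,
      (eLpNorm (fun x => ∑ n ∈ Finset.Icc 1 N, b n • ψ n x) 2 μ) ^ 2
        ≤ ENNReal.ofReal (c₂ * ∑ n ∈ Finset.Icc 1 N, ‖b n‖ ^ 2))
    (b : ℕ → 𝕜) :
    (∫⁻ x, (⨆ j ∈ Finset.Icc 1 N,
        (‖∑ n ∈ Finset.Icc 1 j, b n • ψ n x‖₊ : ℝ≥0∞)) ^ 2 ∂μ) ^ (1 / 2 : ℝ)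
      ≤ ENNReal.ofReal
          (Real.sqrt c₂ * (2 + Real.logb 2 (N : ℝ)) *
            Real.sqrt (∑ n ∈ Finset.Icc 1 N, ‖b n‖ ^ 2)) :=
  menshov_rademacher_inequality_riesz_general μ N ψ c₂ hmem hriesz b
end
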